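/- arXiv:1410.3069 — 4 statements merged into one kernel-verified Lean document; each statement's English description precedes it below -/
import Mathlib

section
/- For x̃ ∈ M̃ and a tangent vector v of M̃ at x̃ (i.e. v₁x̃₁ + v₂x̃₂ + v₃x̃₃ = 0), the image J v under the Jacobian J of Φ satisfies |J v|² = (1 + x̃₄/a)²(v₁² + v₂² + v₃²) + v₄². In particular, the pullback by Φ of the Euclidean metric on ℝ³ to M̃ is the shallow-atmosphere metric. -/
/-!
Writing `h = x₄` and `t = v₄ / a`, the product rule gives `J v = (1 + h/a) v' + t x'`, where
`x', v'` are the first three coordinates. Tangency says `v' ⊥ x'`, so by Pythagoras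
`|J v|² = (1 + h/a)² |v'|² + t² |x'|²`, and `|x'|² = a²` turns the last term into `v₄²`.
-/

open ContinuousLinearMap

theorem sum_sq_add_of_sum_mul_eq_zero {ι : Type*} [Fintype ι] (s t : ℝ) (u w : ι → ℝ)
    (huw : ∑ i, u i * w i = 0) :
    ∑ i, (s * u i + t * w i) ^ 2 = s ^ 2 * ∑ i, u i ^ 2 + t ^ 2 * ∑ i, w i ^ 2 := by
  have hexpand : ∀ i, (s * u i + t * w i) ^ 2 =
      s ^ 2 * u i ^ 2 + 2 * s * t * (u i * w i) + t ^ 2 * w i ^ 2 := fun i => by ring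
  simp only [hexpand, Finset.sum_add_distrib, ← Finset.mul_sum, huw]
  ring

section RadialScaling

variable {n : ℕ}

noncomputable def radialScaling (a : ℝ) (x : Fin (n + 1) → ℝ) : Fin n → ℝ :=
  fun i => (1 + x (Fin.last n) / a) * x i.castSucc

theorem hasFDerivAt_radialScaling (a : ℝ) (x : Fin (n + 1) → ℝ) :
    HasFDerivAt (radialScaling a)
      (pi fun i : Fin n => (1 + x (Fin.last n) / a) • proj (R := ℝ) (φ := fun _ => ℝ) i.castSucc
        + (x i.castSucc / a) • proj (Fin.last n)) x := by
  refine hasFDerivAt_pi.2 fun i => ?_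
  have hheight : HasFDerivAt (fun y : Fin (n + 1) → ℝ => 1 + y (Fin.last n) / a)
      (a⁻¹ • proj (R := ℝ) (φ := fun _ => ℝ) (Fin.last n)) x := by
    simpa only [div_eq_mul_inv, smul_eq_mul, mul_comm] using
      ((hasFDerivAt_apply (𝕜 := ℝ) (Fin.last n) x).mul_const a⁻¹).const_add 1
  refine (hheight.mul (hasFDerivAt_apply (𝕜 := ℝ) i.castSucc x)).congr_fderiv ?_
  ext w
  simp only [add_apply, smul_apply, proj_apply, smul_eq_mul]
  ring

theorem fderiv_radialScaling_apply (a : ℝ) (x v : Fin (n + 1) → ℝ) (i : Fin n) :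
    fderiv ℝ (radialScaling a) x v i =
      (1 + x (Fin.last n) / a) * v i.castSucc + v (Fin.last n) / a * x i.castSucc := by
  rw [(hasFDerivAt_radialScaling a x).fderiv]
  simp only [pi_apply, add_apply, smul_apply, proj_apply, smul_eq_mul]
  ring

theorem sum_sq_fderiv_radialScaling {a : ℝ} (ha : a ≠ 0) {x v : Fin (n + 1) → ℝ}
    (hx : ∑ i : Fin n, x i.castSucc ^ 2 = a ^ 2)
    (hv : ∑ i : Fin n, v i.castSucc * x i.castSucc = 0) :
    ∑ i, fderiv ℝ (radialScaling a) x v i ^ 2 =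
      (1 + x (Fin.last n) / a) ^ 2 * ∑ i : Fin n, v i.castSucc ^ 2 + v (Fin.last n) ^ 2 := by
  simp only [fderiv_radialScaling_apply]
  rw [sum_sq_add_of_sum_mul_eq_zero _ _ _ _ hv, hx]
  field_simp

end RadialScaling

theorem pullback_metric_is_shallow_atmosphere_metric_general
    (a : ℝ) (ha : 0 < a)
    (Φ : (Fin 4 → ℝ) → (Fin 3 → ℝ))
    (hΦ : ∀ x : Fin 4 → ℝ, ∀ i : Fin 3, Φ x i = (1 + x 3 / a) * x i.castSucc)
    (x : Fin 4 → ℝ)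
    (hx : (x 0) ^ 2 + (x 1) ^ 2 + (x 2) ^ 2 = a ^ 2)
    (v : Fin 4 → ℝ)
    (hv : v 0 * x 0 + v 1 * x 1 + v 2 * x 2 = 0) :
    ∑ i : Fin 3, (fderiv ℝ Φ x v i) ^ 2 =
      (1 + x 3 / a) ^ 2 * ((v 0) ^ 2 + (v 1) ^ 2 + (v 2) ^ 2) + (v 3) ^ 2 := by
  obtain rfl : Φ = radialScaling a := funext fun y => funext (hΦ y)
  have hx' : ∑ i : Fin 3, x i.castSucc ^ 2 = a ^ 2 := by simpa [Fin.sum_univ_three] using hx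
  have hv' : ∑ i : Fin 3, v i.castSucc * x i.castSucc = 0 := by
    simpa [Fin.sum_univ_three] using hv
  simpa [Fin.sum_univ_three] using sum_sq_fderiv_radialScaling ha.ne' hx' hv'

/-- for x̃ ∈ M̃ and v tangent to M̃ at x̃ (v₁x̃₁+v₂x̃₂+v₃x̃₃ = 0),
|J v|² = (1 + x̃₄/a)²(v₁²+v₂²+v₃²) + v₄²: the pullback by Φ of the Euclidean
metric on ℝ³ is the shallow-atmosphere metric. -/
theorem pullback_metric_is_shallow_atmosphere_metric
    (a H : ℝ) (ha : 0 < a) (hH : 0 < H)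
    (Φ : (Fin 4 → ℝ) → (Fin 3 → ℝ))
    (hΦ : ∀ x : Fin 4 → ℝ, ∀ i : Fin 3, Φ x i = (1 + x 3 / a) * x i.castSucc)
    (x : Fin 4 → ℝ)
    (hx : (x 0) ^ 2 + (x 1) ^ 2 + (x 2) ^ 2 = a ^ 2)
    (hx4l : 0 ≤ x 3) (hx4u : x 3 ≤ H)
    (v : Fin 4 → ℝ)
    (hv : v 0 * x 0 + v 1 * x 1 + v 2 * x 2 = 0) :
    ∑ i : Fin 3, (fderiv ℝ Φ x v i) ^ 2 =
      (1 + x 3 / a) ^ 2 * ((v 0) ^ 2 + (v 1) ^ 2 + (v 2) ^ 2) + (v 3) ^ 2 :=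
  pullback_metric_is_shallow_atmosphere_metric_general a ha Φ hΦ x hx v hv
end

section
/- The pseudodeterminant of the Jacobian J of Φ at x̃ ∈ M̃, defined as the product of the nonzero singular values of J restricted to the tangent space of M̃, equals (1 + x̃₄/a)². -/
/-!
Write `x = (x', t)` and `s = 1 + t / a`. The Jacobian is `J v = s v' + (v₄ / a) x'`, so for tangent
vectors (`v' ⬝ x' = 0`, `|x'| = a`) one gets `⟪J v, J w⟫ = s² ⟪v, w⟫ + (1 - s²) v₄ w₄`. In an
orthonormal tangent frame `b` the Gram matrix is therefore `s² I + (1 - s²) c cᵀ` with `cᵢ = (bᵢ)₄`.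
The unit normal `(x' / a, 0)` completes `b` to an orthonormal basis of `ℝ⁴`; since the columns of an
orthogonal matrix are orthonormal too and the normal has vanishing fourth entry, `|c| = 1`. The
matrix determinant lemma then gives `det = s⁴ (s² + (1 - s²)) = s⁴`.
-/

theorem Matrix.det_smul_one_add_vecMulVec {K n : Type*} [Field K] [Fintype n] [DecidableEq n]
    [Nonempty n] (c : K) (u v : n → K) :
    (c • (1 : Matrix n n K) + vecMulVec u v).det =
      c ^ (Fintype.card n - 1) * (c + v ⬝ᵥ u) := by
  rcases eq_or_ne c 0 with rfl | hc
  · rw [zero_smul, zero_add, zero_add]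
    rcases subsingleton_or_nontrivial n with _ | _
    · have : Unique n := uniqueOfSubsingleton (Classical.arbitrary n)
      simp [det_unique, vecMulVec_apply, dotProduct, mul_comm]
    · rw [det_vecMulVec, zero_pow (by have := Fintype.one_lt_card (α := n); omega), zero_mul]
  · have hsplit : c • (1 : Matrix n n K) + vecMulVec u v =
        c • (1 + replicateCol Unit (c⁻¹ • u) * replicateRow Unit v) := by
      rw [← vecMulVec_eq, smul_add, smul_vecMulVec, smul_inv_smul₀ hc]
    obtain ⟨m, hm⟩ := Nat.exists_eq_succ_of_ne_zero (Fintype.card_ne_zero (α := n))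
    rw [hsplit, det_smul, det_one_add_replicateCol_mul_replicateRow, dotProduct_smul, hm,
      Nat.succ_sub_one, pow_succ, smul_eq_mul]
    field_simp

open Matrix in
theorem sum_mul_eq_ite_of_rows {R ι : Type*} [CommRing R] [Fintype ι] [DecidableEq ι]
    (w : ι → ι → R) (hw : ∀ i j, ∑ k, w i k * w j k = if i = j then 1 else 0) (k l : ι) :
    ∑ i, w i k * w i l = if k = l then 1 else 0 := by
  have hrows : of w * (of w)ᵀ = 1 := by
    ext i j
    simpa [mul_apply, one_apply] using hw i j
  have hcols : (of w)ᵀ * of w = 1 := mul_eq_one_comm.mp hrows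
  simpa [mul_apply, one_apply] using congr_fun₂ hcols k l

section Cons

variable {R : Type*} [CommRing R] {n : ℕ} {u : Fin (n + 1) → R} {w : Fin n → Fin (n + 1) → R}

theorem sum_cons_mul_cons_eq_ite
    (hu : ∑ k, u k * u k = 1) (huw : ∀ i, ∑ k, w i k * u k = 0)
    (hw : ∀ i j, ∑ k, w i k * w j k = if i = j then 1 else 0) (i j : Fin (n + 1)) :
    ∑ k, Matrix.vecCons u w i k * Matrix.vecCons u w j k = if i = j then 1 else 0 := by
  cases i using Fin.cases <;> cases j using Fin.cases <;>
    simp [hu, hw, huw, Fin.succ_ne_zero, (Fin.succ_ne_zero _).symm, mul_comm (u _)]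

theorem sq_add_sum_sq_eq_one
    (hu : ∑ k, u k * u k = 1) (huw : ∀ i, ∑ k, w i k * u k = 0)
    (hw : ∀ i j, ∑ k, w i k * w j k = if i = j then 1 else 0) (k : Fin (n + 1)) :
    u k ^ 2 + ∑ i, w i k ^ 2 = 1 := by
  simpa [Fin.sum_univ_succ, sq] using
    sum_mul_eq_ite_of_rows _ (sum_cons_mul_cons_eq_ite hu huw hw) k k

end Cons

noncomputable def cylinderMap (a : ℝ) (n : ℕ) (y : Fin (n + 1) → ℝ) : Fin n → ℝ :=
  fun k => (1 + y (Fin.last n) / a) * y k.castSucc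

open ContinuousLinearMap in
theorem fderiv_cylinderMap_apply (a : ℝ) {n : ℕ} (x v : Fin (n + 1) → ℝ) (k : Fin n) :
    fderiv ℝ (cylinderMap a n) x v k =
      (1 + x (Fin.last n) / a) * v k.castSucc + v (Fin.last n) / a * x k.castSucc := by
  have hscale : HasFDerivAt (fun y : Fin (n + 1) → ℝ => 1 + y (Fin.last n) / a)
      (a⁻¹ • proj (Fin.last n) : (Fin (n + 1) → ℝ) →L[ℝ] ℝ) x := by
    simpa [div_eq_inv_mul] using ((hasFDerivAt_apply (Fin.last n) x).const_mul a⁻¹).const_add 1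
  have hderiv : HasFDerivAt (cylinderMap a n) (pi fun k : Fin n =>
      (1 + x (Fin.last n) / a) • proj k.castSucc + x k.castSucc • a⁻¹ • proj (Fin.last n)) x :=
    hasFDerivAt_pi.2 fun k => hscale.mul (hasFDerivAt_apply k.castSucc x)
  rw [hderiv.fderiv]
  simp only [pi_apply, add_apply, smul_apply, proj_apply, smul_eq_mul]
  ring

theorem sum_mul_add_mul_of_orthogonal {ι : Type*} [Fintype ι] {a : ℝ} (ha : a ≠ 0)
    {p v w : ι → ℝ} (hp : ∑ k, p k ^ 2 = a ^ 2) (hv : ∑ k, v k * p k = 0)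
    (hw : ∑ k, w k * p k = 0) (s α β : ℝ) :
    ∑ k, (s * v k + α / a * p k) * (s * w k + β / a * p k) =
      s ^ 2 * ∑ k, v k * w k + α * β := by
  have hexpand : ∑ k, (s * v k + α / a * p k) * (s * w k + β / a * p k) =
      s ^ 2 * ∑ k, v k * w k + s * β / a * ∑ k, v k * p k + s * α / a * ∑ k, w k * p k
        + α * β / a ^ 2 * ∑ k, p k ^ 2 := by
    simp only [Finset.mul_sum, ← Finset.sum_add_distrib]
    exact Finset.sum_congr rfl fun k _ => by ring
  rw [hexpand, hv, hw, hp]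
  field_simp
  ring

theorem sum_fderiv_cylinderMap_mul {a : ℝ} (ha : a ≠ 0) {n : ℕ} {x v w : Fin (n + 1) → ℝ}
    (hx : ∑ k : Fin n, x k.castSucc ^ 2 = a ^ 2)
    (hv : ∑ k : Fin n, v k.castSucc * x k.castSucc = 0)
    (hw : ∑ k : Fin n, w k.castSucc * x k.castSucc = 0) :
    ∑ k, fderiv ℝ (cylinderMap a n) x v k * fderiv ℝ (cylinderMap a n) x w k =
      (1 + x (Fin.last n) / a) ^ 2 * ∑ k, v k * w k
        + (1 - (1 + x (Fin.last n) / a) ^ 2) * (v (Fin.last n) * w (Fin.last n)) := by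
  simp only [fderiv_cylinderMap_apply]
  rw [sum_mul_add_mul_of_orthogonal ha hx hv hw, Fin.sum_univ_castSucc]
  ring

open Matrix in
theorem pseudodeterminant_of_jacobian_general
    (a : ℝ) (ha : 0 < a)
    (Φ : (Fin 4 → ℝ) → (Fin 3 → ℝ))
    (hΦ : ∀ x : Fin 4 → ℝ, ∀ i : Fin 3, Φ x i = (1 + x 3 / a) * x i.castSucc)
    (x : Fin 4 → ℝ)
    (hx : (x 0) ^ 2 + (x 1) ^ 2 + (x 2) ^ 2 = a ^ 2)
    (b : Fin 3 → (Fin 4 → ℝ))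
    (hbtangent : ∀ i : Fin 3, b i 0 * x 0 + b i 1 * x 1 + b i 2 * x 2 = 0)
    (hborthonormal : ∀ i j : Fin 3,
      ∑ k : Fin 4, b i k * b j k = if i = j then (1 : ℝ) else 0) :
    Real.sqrt (Matrix.det (Matrix.of fun i j : Fin 3 =>
        ∑ k : Fin 3, fderiv ℝ Φ x (b i) k * fderiv ℝ Φ x (b j) k)) =
      (1 + x 3 / a) ^ 2 := by
  have hΦ_eq : Φ = cylinderMap a 3 := funext fun y => funext (hΦ y)
  have hx' : ∑ k : Fin 3, x k.castSucc ^ 2 = a ^ 2 := by simpa [Fin.sum_univ_three] using hx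
  have htangent (i : Fin 3) : ∑ k : Fin 3, b i k.castSucc * x k.castSucc = 0 := by
    simpa [Fin.sum_univ_three] using hbtangent i
  set c : Fin 3 → ℝ := fun i => b i 3
  have hgram : (Matrix.of fun i j : Fin 3 =>
      ∑ k : Fin 3, fderiv ℝ Φ x (b i) k * fderiv ℝ Φ x (b j) k) =
      (1 + x 3 / a) ^ 2 • 1 + vecMulVec ((1 - (1 + x 3 / a) ^ 2) • c) c := by
    ext i j
    rw [of_apply, hΦ_eq, sum_fderiv_cylinderMap_mul ha.ne' hx' (htangent i) (htangent j),
      hborthonormal]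
    simp [c, one_apply, vecMulVec_apply]
  set ν : Fin 4 → ℝ := ![x 0 / a, x 1 / a, x 2 / a, 0]
  have hν : ∑ k, ν k * ν k = 1 := by
    simp only [ν, Fin.sum_univ_four, cons_val, mul_zero, add_zero]
    field_simp
    linarith
  have hνb (i : Fin 3) : ∑ k, b i k * ν k = 0 := by
    simp only [ν, Fin.sum_univ_four, cons_val, mul_zero, add_zero]
    field_simp
    linarith [hbtangent i]
  have hc : c ⬝ᵥ c = 1 := by
    simpa [ν, c, dotProduct, sq] using sq_add_sum_sq_eq_one hν hνb hborthonormal 3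
  rw [hgram, det_smul_one_add_vecMulVec, dotProduct_smul, hc, Fintype.card_fin, smul_eq_mul,
    mul_one, add_sub_cancel, mul_one]
  exact Real.sqrt_sq (sq_nonneg _)

/-- the pseudodeterminant of J (product of the nonzero singular
values of J restricted to the tangent space of M̃ at x̃) equals (1 + x̃₄/a)².
Formulated via the Gram matrix: for any orthonormal basis b₀,b₁,b₂ of the
tangent space, √(det Gᵢⱼ) = (1 + x̃₄/a)² where Gᵢⱼ = (J bᵢ)·(J bⱼ). -/
theorem pseudodeterminant_of_jacobian
    (a : ℝ) (ha : 0 < a)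
    (Φ : (Fin 4 → ℝ) → (Fin 3 → ℝ))
    (hΦ : ∀ x : Fin 4 → ℝ, ∀ i : Fin 3, Φ x i = (1 + x 3 / a) * x i.castSucc)
    (x : Fin 4 → ℝ)
    (hx : (x 0) ^ 2 + (x 1) ^ 2 + (x 2) ^ 2 = a ^ 2)
    (hx4 : 0 ≤ x 3)
    (b : Fin 3 → (Fin 4 → ℝ))
    (hbtangent : ∀ i : Fin 3, b i 0 * x 0 + b i 1 * x 1 + b i 2 * x 2 = 0)
    (hborthonormal : ∀ i j : Fin 3,
      ∑ k : Fin 4, b i k * b j k = if i = j then (1 : ℝ) else 0) :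
    Real.sqrt (Matrix.det (Matrix.of fun i j : Fin 3 =>
        ∑ k : Fin 3, fderiv ℝ Φ x (b i) k * fderiv ℝ Φ x (b j) k)) =
      (1 + x 3 / a) ^ 2 :=
  pseudodeterminant_of_jacobian_general a ha Φ hΦ x hx b hbtangent hborthonormal
end

section
/- For x̃ ∈ M̃ with x̃₄ > 0, the Jacobian J of Φ at x̃, restricted to the tangent space of M̃, is not an isometry; specifically there exists a unit tangent vector v with |Jv| = 1 + x̃₄/a > 1. -/
/-!
Differentiating `Φ` at `x̃` in a direction `v` with `v₄ = 0` only sees the factor `1 + x̃₄/a`,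
so `J v = (1 + x̃₄/a) (v₁, v₂, v₃)`. Every vector of `ℝ³` has a unit vector orthogonal to it;
padded with `v₄ = 0` it is a unit tangent vector of `M̃` that `J` stretches by `1 + x̃₄/a > 1`.
-/

section CoordinateScaling

variable {𝕜 ι κ : Type*} [NontriviallyNormedField 𝕜] [Fintype ι]

def coordScaling (a : 𝕜) (k : ι) (e : κ → ι) (y : ι → 𝕜) : κ → 𝕜 :=
  fun j => (1 + y k / a) * y (e j)

theorem fderiv_coordScaling_apply (a : 𝕜) (k : ι) (e : κ → ι) (x v : ι → 𝕜) (i : κ) :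
    fderiv 𝕜 (coordScaling a k e) x v i = (1 + x k / a) * v (e i) + v k / a * x (e i) := by
  have hproj (m : ι) : fderiv 𝕜 (fun y : ι → 𝕜 => y m) x = ContinuousLinearMap.proj m :=
    (hasFDerivAt_apply m x).fderiv
  unfold coordScaling
  rw [fderiv_pi fun j => by fun_prop]
  simp (disch := fun_prop) [fderiv_fun_mul, div_eq_mul_inv, hproj]
  ring

theorem fderiv_coordScaling_of_apply_eq_zero (a : 𝕜) (k : ι) (e : κ → ι) (x : ι → 𝕜)
    {v : ι → 𝕜} (hv : v k = 0) :
    fderiv 𝕜 (coordScaling a k e) x v = (1 + x k / a) • (v ∘ e) := by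
  ext i
  simp [fderiv_coordScaling_apply, hv]

end CoordinateScaling

theorem exists_orthogonal_sq_add_sq_add_sq_eq_one (p q r : ℝ) :
    ∃ s t u : ℝ, s * p + t * q + u * r = 0 ∧ s ^ 2 + t ^ 2 + u ^ 2 = 1 := by
  by_cases hpq : p = 0 ∧ q = 0
  · exact ⟨1, 0, 0, by simp [hpq.1], by norm_num⟩
  · have hpos : 0 < p ^ 2 + q ^ 2 := by
      rcases not_and_or.1 hpq with h | h <;> positivity
    set ρ := Real.sqrt (p ^ 2 + q ^ 2)
    have hρ : 0 < ρ := Real.sqrt_pos.2 hpos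
    have hρ2 : ρ ^ 2 = p ^ 2 + q ^ 2 := Real.sq_sqrt hpos.le
    refine ⟨-q / ρ, p / ρ, 0, by ring, ?_⟩
    field_simp
    linarith

theorem jacobian_not_isometry_general
    (a : ℝ) (ha : 0 < a)
    (Φ : (Fin 4 → ℝ) → (Fin 3 → ℝ))
    (hΦ : ∀ x : Fin 4 → ℝ, ∀ i : Fin 3, Φ x i = (1 + x 3 / a) * x i.castSucc)
    (x : Fin 4 → ℝ)
    (hx4 : 0 < x 3) :
    ∃ v : Fin 4 → ℝ,
      v 0 * x 0 + v 1 * x 1 + v 2 * x 2 = 0 ∧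
      ∑ i : Fin 4, (v i) ^ 2 = 1 ∧
      Real.sqrt (∑ i : Fin 3, (fderiv ℝ Φ x v i) ^ 2) = 1 + x 3 / a ∧
      1 < 1 + x 3 / a := by
  have hΦ_eq : Φ = coordScaling a 3 Fin.castSucc := funext₂ hΦ
  obtain ⟨s, t, u, horth, hunit⟩ := exists_orthogonal_sq_add_sq_add_sq_eq_one (x 0) (x 1) (x 2)
  have hstretch : 1 < 1 + x 3 / a := lt_add_of_pos_right 1 (div_pos hx4 ha)
  refine ⟨![s, t, u, 0], by simpa using horth, by simpa [Fin.sum_univ_four] using hunit, ?_,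
    hstretch⟩
  have hJ : fderiv ℝ Φ x ![s, t, u, 0] = (1 + x 3 / a) • ![s, t, u] := by
    rw [hΦ_eq, fderiv_coordScaling_of_apply_eq_zero a 3 Fin.castSucc x rfl]
    congr 1
    ext i
    fin_cases i <;> rfl
  have hsq : ∑ i : Fin 3, (fderiv ℝ Φ x ![s, t, u, 0] i) ^ 2 = (1 + x 3 / a) ^ 2 := by
    simp only [hJ, Fin.sum_univ_three, Pi.smul_apply, smul_eq_mul, Matrix.cons_val]
    linear_combination (1 + x 3 / a) ^ 2 * hunit
  rw [hsq, Real.sqrt_sq (by linarith)]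

/-- for x̃ ∈ M̃ with x̃₄ > 0, J restricted to the tangent space is
not an isometry: there is a unit tangent vector v with |Jv| = 1 + x̃₄/a > 1. -/
theorem jacobian_not_isometry
    (a : ℝ) (ha : 0 < a)
    (Φ : (Fin 4 → ℝ) → (Fin 3 → ℝ))
    (hΦ : ∀ x : Fin 4 → ℝ, ∀ i : Fin 3, Φ x i = (1 + x 3 / a) * x i.castSucc)
    (x : Fin 4 → ℝ)
    (hx : (x 0) ^ 2 + (x 1) ^ 2 + (x 2) ^ 2 = a ^ 2)
    (hx4 : 0 < x 3) :
    ∃ v : Fin 4 → ℝ,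
      v 0 * x 0 + v 1 * x 1 + v 2 * x 2 = 0 ∧
      ∑ i : Fin 4, (v i) ^ 2 = 1 ∧
      Real.sqrt (∑ i : Fin 3, (fderiv ℝ Φ x v i) ^ 2) = 1 + x 3 / a ∧
      1 < 1 + x 3 / a :=
  jacobian_not_isometry_general a ha Φ hΦ x hx4
end

section
/- For the shallow-atmosphere map Φ and density transformation ρ = (1/det J) ρ̃ ∘ Φ⁻¹ with det J = (1 + x̃₄/a)², the change-of-variables formula holds: the integral of ρ over M (with respect to 3-dimensional Lebesgue measure on the annulus) equals the integral of ρ̃ over M̃ (with respect to the surface measure induced from ℝ⁴, which equals the product of the sphere's surface measure and Lebesgue measure in x̃₄). -/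
/-!
In polar coordinates `x = r • s` Lebesgue measure on `ℝ³` is `r² dr` times the surface measure of
the unit sphere. On the annulus the factor `r²` cancels the Jacobian weight `(a / r)²` of `ρ` up to
the constant `a²`, and the shift `t = r - a` turns the radial integral over `[a, a + H]` into the
integral of `ρ̃ (a • s, ·)` over `[0, H]`.
-/

open MeasureTheory Set Metric Measure Module

section PolarCoordinates

variable {E F : Type*} [NormedAddCommGroup E] [NormedSpace ℝ E] [FiniteDimensional ℝ E]
  [MeasurableSpace E] [BorelSpace E] [Nontrivial E] [NormedAddCommGroup F] [NormedSpace ℝ F]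
  (μ : Measure E) [μ.IsAddHaarMeasure]

theorem integral_volumeIoiPow (n : ℕ) (g : ℝ → F) :
    ∫ r : Ioi (0 : ℝ), g r ∂volumeIoiPow n = ∫ r in Ioi (0 : ℝ), r ^ n • g r := by
  simp only [volumeIoiPow, ENNReal.ofReal]
  rw [integral_withDensity_eq_integral_smul (measurable_subtype_coe.pow_const _).real_toNNReal,
    integral_subtype_comap measurableSet_Ioi fun r ↦ Real.toNNReal (r ^ n) • g r]
  refine setIntegral_congr_fun measurableSet_Ioi fun r hr ↦ ?_
  rw [NNReal.smul_def, Real.coe_toNNReal _ (pow_nonneg hr.out.le _)]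

theorem integral_eq_integral_toSphere_integral_Ioi {f : E → F} (hf : Integrable f μ) :
    ∫ x, f x ∂μ = ∫ s : sphere (0 : E) 1,
      (∫ r in Ioi (0 : ℝ), r ^ (finrank ℝ E - 1) • f (r • (s : E))) ∂μ.toSphere := by
  have hpolar := μ.measurePreserving_homeomorphUnitSphereProd
  have hembed := (homeomorphUnitSphereProd E).measurableEmbedding
  set g : sphere (0 : E) 1 × Ioi (0 : ℝ) → F := fun p ↦ f ((p.2 : ℝ) • (p.1 : E))
  have hg : g ∘ homeomorphUnitSphereProd E = f ∘ Subtype.val := by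
    funext x
    simp [g, smul_inv_smul₀ (norm_ne_zero_iff.mpr x.2)]
  have hfc : Integrable (f ∘ Subtype.val) (μ.comap ((↑) : ({0}ᶜ : Set E) → E)) := by
    rwa [← integrableOn_iff_comap_subtypeVal (measurableSet_singleton 0).compl, IntegrableOn,
      restrict_compl_singleton]
  calc ∫ x, f x ∂μ = ∫ x : ({0}ᶜ : Set E), f x ∂μ.comap (↑) := by
        rw [integral_subtype_comap (measurableSet_singleton 0).compl, restrict_compl_singleton]
    _ = ∫ p, g p ∂μ.toSphere.prod (volumeIoiPow (finrank ℝ E - 1)) := by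
        rw [← hpolar.integral_comp hembed]
        exact integral_congr_ae (.of_forall fun x ↦ (congrFun hg x).symm)
    _ = _ := by
        rw [integral_prod g ((hpolar.integrable_comp_emb hembed).mp (hg ▸ hfc))]
        exact integral_congr_ae (.of_forall fun s ↦ integral_volumeIoiPow _ fun r ↦ f (r • (s : E)))

theorem setIntegral_preimage_norm_eq_integral_toSphere {S : Set ℝ} (hS : MeasurableSet S)
    {f : E → F} (hf : IntegrableOn f ((‖·‖) ⁻¹' S) μ) :
    ∫ x in (‖·‖) ⁻¹' S, f x ∂μ = ∫ s : sphere (0 : E) 1,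
      (∫ r in Ioi (0 : ℝ) ∩ S, r ^ (finrank ℝ E - 1) • f (r • (s : E))) ∂μ.toSphere := by
  have hSE : MeasurableSet ((‖·‖) ⁻¹' S : Set E) := measurable_norm hS
  rw [← integral_indicator hSE, integral_eq_integral_toSphere_integral_Ioi μ
    ((integrable_indicator_iff hSE).mpr hf)]
  refine integral_congr_ae (.of_forall fun s ↦ ?_)
  beta_reduce
  rw [← setIntegral_indicator hS]
  refine setIntegral_congr_fun measurableSet_Ioi fun r (hr : 0 < r) ↦ ?_
  have hnorm : ‖r • (s : E)‖ = r := by simp [norm_smul, hr.le]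
  by_cases hrS : r ∈ S <;> simp [hrS, hnorm]

end PolarCoordinates

theorem isCompact_norm_preimage_Icc {E : Type*} [NormedAddCommGroup E] [ProperSpace E]
    (a b : ℝ) : IsCompact ((‖·‖) ⁻¹' Icc a b : Set E) :=
  (isCompact_closedBall 0 b).of_isClosed_subset (isClosed_Icc.preimage continuous_norm)
    fun _ hx ↦ mem_closedBall_zero_iff.mpr hx.2

theorem integral_Icc_comp_sub_right {F : Type*} [NormedAddCommGroup F] [NormedSpace ℝ F]
    (g : ℝ → F) (a b c : ℝ) : ∫ x in Icc (b + a) (c + a), g (x - a) = ∫ x in Icc b c, g x := by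
  rw [← preimage_sub_const_Icc]
  exact (measurePreserving_sub_right volume a).setIntegral_preimage_emb
    (measurableEmbedding_subRight a) g _

theorem shallow_atmosphere_change_of_variables_general
    (a H : ℝ) (ha : 0 < a)
    (ρt : EuclideanSpace ℝ (Fin 3) × ℝ → ℝ)
    (hρt : Continuous ρt)
    (M : Set (EuclideanSpace ℝ (Fin 3)))
    (hM : M = {x | a ≤ ‖x‖ ∧ ‖x‖ ≤ a + H})
    (ρ : EuclideanSpace ℝ (Fin 3) → ℝ)
    (hρ : ∀ x : EuclideanSpace ℝ (Fin 3), x ≠ 0 →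
      ρ x = (a / ‖x‖) ^ 2 * ρt ((a / ‖x‖) • x, ‖x‖ - a)) :
    ∫ x in M, ρ x =
      ∫ s : Metric.sphere (0 : EuclideanSpace ℝ (Fin 3)) 1,
        (a ^ 2 * ∫ t in Set.Icc (0 : ℝ) H,
          ρt (a • (s : EuclideanSpace ℝ (Fin 3)), t))
        ∂(volume : Measure (EuclideanSpace ℝ (Fin 3))).toSphere := by
  have hM_norm : M = (‖·‖) ⁻¹' Icc a (a + H) := hM
  have hM_norm_ne : ∀ x ∈ M, ‖x‖ ≠ 0 := fun x hx ↦ (ha.trans_le (hM ▸ hx).1).ne'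
  have hρ_int : IntegrableOn ρ M := by
    refine ContinuousOn.integrableOn_compact (hM_norm ▸ isCompact_norm_preimage_Icc _ _)
      (ContinuousOn.congr ?_ fun x hx ↦ hρ x (norm_ne_zero_iff.mp (hM_norm_ne x hx)))
    fun_prop (disch := assumption)
  rw [hM_norm, setIntegral_preimage_norm_eq_integral_toSphere volume measurableSet_Icc
    (hM_norm ▸ hρ_int), finrank_euclideanSpace_fin,
    (inter_eq_right (s := Ioi 0)).mpr fun r hr ↦ ha.trans_le hr.1]
  refine integral_congr_ae (.of_forall fun s ↦ ?_)
  have hs : ‖(s : EuclideanSpace ℝ (Fin 3))‖ = 1 := norm_eq_of_mem_sphere s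
  calc ∫ r in Icc a (a + H), r ^ 2 • ρ (r • (s : EuclideanSpace ℝ (Fin 3)))
      = ∫ r in Icc (0 + a) (H + a), a ^ 2 * ρt (a • (s : EuclideanSpace ℝ (Fin 3)), r - a) := by
        rw [zero_add, add_comm H]
        refine setIntegral_congr_fun measurableSet_Icc fun r hr ↦ ?_
        have hr0 : 0 < r := ha.trans_le hr.1
        rw [hρ _ (smul_ne_zero hr0.ne' (ne_zero_of_mem_unit_sphere s)), norm_smul, hs, Real.norm_of_nonneg hr0.le, mul_one, smul_smul,
          div_mul_cancel₀ _ hr0.ne', smul_eq_mul]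
        field_simp
    _ = _ := by rw [integral_Icc_comp_sub_right (fun t ↦ a ^ 2 * ρt _), integral_const_mul]

/-- change of variables for the shallow-atmosphere map. With
ρ = (1/det J) ρ̃ ∘ Φ⁻¹ and det J = (1 + x̃₄/a)² = (‖x‖/a)², the integral of ρ
over the annulus M (3-d Lebesgue measure) equals the integral of ρ̃ over
M̃ = S²_a × [0,H], the latter written via the unit sphere surface measure
(`volume.toSphere`, with area element scaled by a²) times Lebesgue measure
in x̃₄. -/
theorem shallow_atmosphere_change_of_variables
    (a H : ℝ) (ha : 0 < a) (hH : 0 < H)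
    (ρt : EuclideanSpace ℝ (Fin 3) × ℝ → ℝ)
    (hρt : Continuous ρt)
    (M : Set (EuclideanSpace ℝ (Fin 3)))
    (hM : M = {x | a ≤ ‖x‖ ∧ ‖x‖ ≤ a + H})
    (ρ : EuclideanSpace ℝ (Fin 3) → ℝ)
    (hρ : ∀ x : EuclideanSpace ℝ (Fin 3), x ≠ 0 →
      ρ x = (a / ‖x‖) ^ 2 * ρt ((a / ‖x‖) • x, ‖x‖ - a)) :
    ∫ x in M, ρ x =
      ∫ s : Metric.sphere (0 : EuclideanSpace ℝ (Fin 3)) 1,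
        (a ^ 2 * ∫ t in Set.Icc (0 : ℝ) H,
          ρt (a • (s : EuclideanSpace ℝ (Fin 3)), t))
        ∂(volume : Measure (EuclideanSpace ℝ (Fin 3))).toSphere :=
  shallow_atmosphere_change_of_variables_general a H ha ρt hρt M hM ρ hρ
end
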